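/- arXiv:2201.01598 — 4 statements merged into one kernel-verified Lean document; each statement's English description precedes it below -/
import Mathlib

section
/- Conservation of the center of position: let N ≥ 2, J ∈ ℝ, α, β > 0, and let x : ℝ → (Fin N → ℝ²) and θ : ℝ → (Fin N → ℝ) be such that x_i(t) ≠ x_j(t) for all t and all i ≠ j, and for every i and every t the map t ↦ x_i(t) has derivative (1/(N−1)) ∑_{j≠i} Γ(x_j(t) − x_i(t), θ_j(t) − θ_i(t)) at t. Then the center of position (1/N) ∑_{i=1}^{N} x_i(t) is constant in t, i.e., ∑_i x_i(t) = ∑_i x_i(0) for all t. -/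
/-!
Since `Γ(-x, -θ) = -Γ(x, θ)`, the force exerted by `j` on `i` is the negative of the force exerted
by `i` on `j`. Summing the equations of motion over `i`, the pairwise forces cancel, so the sum of
the positions has derivative zero and is therefore constant.
-/

/-- The swarmalator spatial interaction kernel on ℝ²:
`Γ(x, θ) = (x/‖x‖^α)(1 + J cos θ) − x/‖x‖^β`. -/
noncomputable def swarmKernel (J α β : ℝ) (x : EuclideanSpace ℝ (Fin 2)) (θ : ℝ) :
    EuclideanSpace ℝ (Fin 2) :=
  ((1 + J * Real.cos θ) / ‖x‖ ^ α) • x - (‖x‖ ^ β)⁻¹ • x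

theorem swarmKernel_neg (J α β : ℝ) (x : EuclideanSpace ℝ (Fin 2)) (θ : ℝ) :
    swarmKernel J α β (-x) (-θ) = -swarmKernel J α β x θ := by
  simp only [swarmKernel, norm_neg, Real.cos_neg, smul_neg]
  abel

/-- The involution `(i, j) ↦ (j, i)` of the off-diagonal matches each term with its negative, so
no division by two (hence no torsion-freeness of `M`) is needed. -/
theorem Finset.sum_sum_erase_eq_zero_of_antisymm {ι M : Type*} [DecidableEq ι] [AddCommGroup M]
    (s : Finset ι) {F : ι → ι → M} (hF : ∀ i j, F i j = -F j i) :
    ∑ i ∈ s, ∑ j ∈ s.erase i, F i j = 0 := by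
  rw [← sum_finset_product' s.offDiag s s.erase (by simp [mem_offDiag]; tauto)]
  refine sum_involution (fun p _ => p.swap) (fun p _ => by simp [hF p.1 p.2])
    (fun p hp _ hswap => (mem_offDiag.1 hp).2.2 (congrArg Prod.snd hswap))
    (fun p hp => ?_) (fun p _ => p.swap_swap)
  obtain ⟨hp₁, hp₂, hne⟩ := mem_offDiag.1 hp
  exact mem_offDiag.2 ⟨hp₂, hp₁, hne.symm⟩

theorem sum_eq_of_hasDerivAt_antisymm {ι E : Type*} [Fintype ι] [DecidableEq ι]
    [NormedAddCommGroup E] [NormedSpace ℝ E] (x : ℝ → ι → E) (F : ℝ → ι → ι → E)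
    (hF : ∀ t i j, F t i j = -F t j i)
    (hx : ∀ i t, HasDerivAt (fun s => x s i) (∑ j ∈ Finset.univ.erase i, F t i j) t)
    (t t' : ℝ) :
    ∑ i, x t i = ∑ i, x t' i := by
  have hsum (t : ℝ) : HasDerivAt (fun s => ∑ i, x s i) 0 t := by
    simpa only [Finset.sum_sum_erase_eq_zero_of_antisymm _ (hF t)]
      using HasDerivAt.fun_sum (u := Finset.univ) fun i _ => hx i t
  exact is_const_of_deriv_eq_zero (fun s => (hsum s).differentiableAt)
    (fun s => (hsum s).deriv) t t'

theorem center_of_position_conserved_general (N : ℕ) (J α β : ℝ)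
    (x : ℝ → Fin N → EuclideanSpace ℝ (Fin 2)) (θ : ℝ → Fin N → ℝ)
    (hode : ∀ (i : Fin N) (t : ℝ),
      HasDerivAt (fun s => x s i)
        ((1 / ((N : ℝ) - 1)) • ∑ j ∈ Finset.univ.erase i,
          swarmKernel J α β (x t j - x t i) (θ t j - θ t i)) t) :
    ∀ t : ℝ, ∑ i : Fin N, x t i = ∑ i : Fin N, x 0 i := by
  have hforce_antisymm (t : ℝ) (i j : Fin N) :
      (1 / ((N : ℝ) - 1)) • swarmKernel J α β (x t j - x t i) (θ t j - θ t i) =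
        -((1 / ((N : ℝ) - 1)) • swarmKernel J α β (x t i - x t j) (θ t i - θ t j)) := by
    rw [← smul_neg, ← swarmKernel_neg, neg_sub, neg_sub]
  intro t
  exact sum_eq_of_hasDerivAt_antisymm x _ hforce_antisymm
    (fun i t => by simpa only [Finset.smul_sum] using hode i t) t 0

/-- Conservation of the center of position for the swarmalator spatial dynamics
`ẋ_i = (1/(N−1)) ∑_{j≠i} Γ(x_j − x_i, θ_j − θ_i)`. -/
theorem center_of_position_conserved (N : ℕ) (hN : 2 ≤ N) (J α β : ℝ)
    (hα : 0 < α) (hβ : 0 < β)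
    (x : ℝ → Fin N → EuclideanSpace ℝ (Fin 2)) (θ : ℝ → Fin N → ℝ)
    (hsep : ∀ t : ℝ, ∀ i j : Fin N, i ≠ j → x t i ≠ x t j)
    (hode : ∀ (i : Fin N) (t : ℝ),
      HasDerivAt (fun s => x s i)
        ((1 / ((N : ℝ) - 1)) • ∑ j ∈ Finset.univ.erase i,
          swarmKernel J α β (x t j - x t i) (θ t j - θ t i)) t) :
    ∀ t : ℝ, ∑ i : Fin N, x t i = ∑ i : Fin N, x 0 i :=
  center_of_position_conserved_general N J α β x θ hode
end

section
/- Finite-time collision avoidance: let N ≥ 2, 0 ≤ J < 1, and exponents 1 ≤ α < β. Let θ : [0,∞) → (Fin N → ℝ) be continuous, and let x : [0,∞) → (Fin N → ℝ²) be continuous with pairwise distinct initial positions (x_i(0) ≠ x_j(0) for all i ≠ j) and such that for every i and every t ≥ 0 at which all positions are pairwise distinct, t ↦ x_i(t) has derivative (1/(N−1)) ∑_{j≠i} [ (x_j(t)−x_i(t))/|x_j(t)−x_i(t)|^α · (1 + J·cos(θ_j(t)−θ_i(t))) − (x_j(t)−x_i(t))/|x_j(t)−x_i(t)|^β ] at t.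 Then the swarmalators never collide: x_i(t) ≠ x_j(t) for all t ∈ [0,∞) and all i ≠ j. -/
/-!
Suppose some collision happens; let `τ > 0` be the first collision time and `A` the cluster of
particles that meet at the point `x τ i`. The spread `Q t = ∑ k ∈ A, ∑ l ∈ A, ‖x t k - x t l‖ ^ 2`
is nonnegative and vanishes at `τ`. Just before `τ` the particles outside `A` stay away from `A`,
so their forces on `A` are bounded, while the forces inside `A` are antisymmetric; hence `Q'` is a
positive multiple of `#A * ∑ ⟪x k - x j, F k j⟫` plus an outside term bounded by a multiple of
`∑ ‖x k - x l‖`. A pair at distance `r` contributes `r ^ (2 - β) - c * r ^ (2 - α)` to the first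
sum, and since `β > α` and `β > 1` this repulsion dominates both the attraction and the outside
term as `r → 0`. So `Q' > 0` just before `τ`, forcing `Q < Q τ = 0` there: a contradiction.
-/

open Filter Topology Set Finset
open scoped RealInnerProductSpace

section Force

variable {E : Type*} [NormedAddCommGroup E] [InnerProductSpace ℝ E]

noncomputable def swarmForce (α β c : ℝ) (w : E) : E := (c / ‖w‖ ^ α) • w - (‖w‖ ^ β)⁻¹ • w

variable {α β c : ℝ} {w : E}

@[simp]
lemma swarmForce_zero : swarmForce α β c (0 : E) = 0 := by
  simp [swarmForce]

@[simp]
lemma swarmForce_neg : swarmForce α β c (-w) = -swarmForce α β c w := by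
  simp only [swarmForce, norm_neg, smul_neg]
  abel

lemma inner_neg_swarmForce (hw : w ≠ 0) :
    ⟪-w, swarmForce α β c w⟫ = ‖w‖ ^ (2 - β) - c * ‖w‖ ^ (2 - α) := by
  have hr : 0 < ‖w‖ := norm_pos_iff.mpr hw
  rw [swarmForce, inner_sub_right, real_inner_smul_right, real_inner_smul_right, inner_neg_left,
    real_inner_self_eq_norm_sq, Real.rpow_sub hr, Real.rpow_sub hr, Real.rpow_two]
  field_simp
  ring

lemma norm_swarmForce_le (hw : w ≠ 0) :
    ‖swarmForce α β c w‖ ≤ |c| * ‖w‖ ^ (1 - α) + ‖w‖ ^ (1 - β) := by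
  have hr : 0 < ‖w‖ := norm_pos_iff.mpr hw
  calc ‖swarmForce α β c w‖ ≤ ‖(c / ‖w‖ ^ α) • w‖ + ‖(‖w‖ ^ β)⁻¹ • w‖ := norm_sub_le _ _
    _ = |c| * ‖w‖ ^ (1 - α) + ‖w‖ ^ (1 - β) := by
      rw [norm_smul, norm_smul, Real.norm_eq_abs, Real.norm_eq_abs, abs_div, abs_inv,
        abs_of_pos (Real.rpow_pos_of_pos hr α), abs_of_pos (Real.rpow_pos_of_pos hr β),
        Real.rpow_sub hr, Real.rpow_sub hr, Real.rpow_one]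
      ring

lemma swarmForce_isBigO_one {T : Type*} {l : Filter T} {w : T → E} {w₀ : E} {c : T → ℝ} {C : ℝ}
    (hw : Tendsto w l (𝓝 w₀)) (hw₀ : w₀ ≠ 0) (hc : ∀ t, |c t| ≤ C) :
    (fun t => swarmForce α β (c t) (w t)) =O[l] fun _ => (1 : ℝ) := by
  have hnorm : Tendsto (fun t => ‖w t‖) l (𝓝 ‖w₀‖) := hw.norm
  have hbound : Tendsto (fun t => C * ‖w t‖ ^ (1 - α) + ‖w t‖ ^ (1 - β)) l
      (𝓝 (C * ‖w₀‖ ^ (1 - α) + ‖w₀‖ ^ (1 - β))) :=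
    ((hnorm.rpow_const (.inl (norm_ne_zero_iff.mpr hw₀))).const_mul C).add
      (hnorm.rpow_const (.inl (norm_ne_zero_iff.mpr hw₀)))
  refine Asymptotics.IsBigO.trans ?_ (hbound.isBigO_one ℝ)
  refine Asymptotics.IsBigO.of_bound 1 ((hw.eventually_ne hw₀).mono fun t hwt => ?_)
  rw [one_mul, Real.norm_eq_abs]
  refine (norm_swarmForce_le hwt).trans (le_trans ?_ (le_abs_self _))
  gcongr
  exact hc t

end Force

lemma eventually_mul_lt_mul_rpow_sub_rpow {α β n : ℝ} (hαβ : α < β) (hβ : 1 < β) (hn : 0 < n)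
    (C M : ℝ) : ∀ᶠ r in 𝓝[>] (0 : ℝ), ∀ c ≤ C, M * r < n * (r ^ (2 - β) - c * r ^ (2 - α)) := by
  have hlim : Tendsto (fun r : ℝ => M * r ^ (β - 1) + n * C * r ^ (β - α)) (𝓝 0) (𝓝 0) := by
    have hcont : Continuous fun r : ℝ => M * r ^ (β - 1) + n * C * r ^ (β - α) := by
      fun_prop (disch := linarith)
    simpa [Real.zero_rpow (by linarith : β - 1 ≠ 0), Real.zero_rpow (by linarith : β - α ≠ 0)]
      using hcont.tendsto 0
  filter_upwards [nhdsWithin_le_nhds (hlim.eventually (gt_mem_nhds hn)), self_mem_nhdsWithin]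
    with r hsmall (hr : 0 < r) c hc
  have h1 : r = r ^ (2 - β) * r ^ (β - 1) := by
    rw [← Real.rpow_add hr]; ring_nf; rw [Real.rpow_one]
  have h2 : r ^ (2 - α) = r ^ (2 - β) * r ^ (β - α) := by
    rw [← Real.rpow_add hr]; ring_nf
  have hpos : 0 < r ^ (2 - β) := Real.rpow_pos_of_pos hr _
  have hpos' : 0 < r ^ (β - α) := Real.rpow_pos_of_pos hr _
  rw [h2]
  nth_rewrite 1 [h1]
  nlinarith [mul_le_mul_of_nonneg_right hc (mul_pos hpos hpos').le]

lemma Finset.sum_sum_eq_zero_of_antisymm {ι M : Type*} [AddCommGroup M] [IsAddTorsionFree M]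
    {s : Finset ι} {F : ι → ι → M} (hF : ∀ k ∈ s, ∀ j ∈ s, F j k = -F k j) :
    ∑ k ∈ s, ∑ j ∈ s, F k j = 0 := by
  rw [← self_eq_neg]
  calc ∑ k ∈ s, ∑ j ∈ s, F k j = ∑ k ∈ s, ∑ j ∈ s, -F j k :=
        Finset.sum_congr rfl fun k hk => Finset.sum_congr rfl fun j hj => hF j hj k hk
    _ = -∑ k ∈ s, ∑ j ∈ s, F k j := by
        rw [Finset.sum_comm]; simp only [Finset.sum_neg_distrib]

section Sums

variable {ι E : Type*} [NormedAddCommGroup E] [InnerProductSpace ℝ E] {s : Finset ι}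

lemma sum_sum_inner_sub_sub (y w : ι → E) :
    ∑ k ∈ s, ∑ l ∈ s, ⟪y k - y l, w k - w l⟫
      = 2 * (#s * ∑ k ∈ s, ⟪y k, w k⟫ - ⟪∑ k ∈ s, y k, ∑ k ∈ s, w k⟫) := by
  simp only [inner_sub_left, inner_sub_right, Finset.sum_sub_distrib, Finset.sum_const,
    nsmul_eq_mul, sum_inner, inner_sum, ← Finset.mul_sum]
  rw [Finset.sum_comm (f := fun k l => ⟪y l, w k⟫)]
  ring

lemma sum_sum_inner_sub_of_antisymm (y : ι → E) {F : ι → ι → E}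
    (hF : ∀ k ∈ s, ∀ j ∈ s, F j k = -F k j) :
    ∑ k ∈ s, ∑ j ∈ s, ⟪y k - y j, F k j⟫ = 2 * ∑ k ∈ s, ⟪y k, ∑ j ∈ s, F k j⟫ := by
  have hswap : ∑ k ∈ s, ∑ j ∈ s, ⟪y j, F k j⟫ = -∑ k ∈ s, ∑ j ∈ s, ⟪y k, F k j⟫ := by
    rw [Finset.sum_comm, ← Finset.sum_neg_distrib]
    refine Finset.sum_congr rfl fun j hj => ?_
    rw [← Finset.sum_neg_distrib]
    refine Finset.sum_congr rfl fun k hk => ?_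
    rw [hF j hj k hk, inner_neg_right]
  simp only [inner_sub_left, Finset.sum_sub_distrib, hswap, inner_sum]
  ring

lemma sum_sum_inner_sub_sum_of_antisymm (y : ι → E) {F : ι → ι → E}
    (hF : ∀ k ∈ s, ∀ j ∈ s, F j k = -F k j) :
    ∑ k ∈ s, ∑ l ∈ s, ⟪y k - y l, ∑ j ∈ s, F k j - ∑ j ∈ s, F l j⟫
      = #s * ∑ k ∈ s, ∑ j ∈ s, ⟪y k - y j, F k j⟫ := by
  have : IsAddTorsionFree E := .of_isTorsionFree ℝ E
  rw [sum_sum_inner_sub_sub, Finset.sum_sum_eq_zero_of_antisymm hF, inner_zero_right,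
    sum_sum_inner_sub_of_antisymm y hF]
  ring

lemma neg_sum_sum_le_sum_sum_inner_sub (y : ι → E) {H : ι → E} {M : ι → ℝ}
    (hH : ∀ k ∈ s, ‖H k‖ ≤ M k) :
    -∑ k ∈ s, ∑ l ∈ s, (M k + M l) * ‖y k - y l‖ ≤ ∑ k ∈ s, ∑ l ∈ s, ⟪y k - y l, H k - H l⟫ := by
  rw [← Finset.sum_neg_distrib]
  refine Finset.sum_le_sum fun k hk => ?_
  rw [← Finset.sum_neg_distrib]
  refine Finset.sum_le_sum fun l hl => ?_
  have hHkl : ‖H k - H l‖ ≤ M k + M l := (norm_sub_le _ _).trans (add_le_add (hH k hk) (hH l hl))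
  have := (abs_le.mp (abs_real_inner_le_norm (y k - y l) (H k - H l))).1
  nlinarith [norm_nonneg (y k - y l)]

lemma sum_sum_inner_sub_pos (y : ι → E) {F : ι → ι → E} {H : ι → E} {M : ι → ℝ}
    (hF : ∀ k ∈ s, ∀ j ∈ s, F j k = -F k j) (hH : ∀ k ∈ s, ‖H k‖ ≤ M k)
    (hdom : ∀ k ∈ s, ∀ j ∈ s, k ≠ j → (M k + M j) * ‖y k - y j‖ < #s * ⟪y k - y j, F k j⟫)
    (hpair : ∃ k ∈ s, ∃ j ∈ s, k ≠ j) :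
    0 < ∑ k ∈ s, ∑ l ∈ s, ⟪y k - y l, (∑ j ∈ s, F k j + H k) - (∑ j ∈ s, F l j + H l)⟫ := by
  have hsplit : ∑ k ∈ s, ∑ l ∈ s, ⟪y k - y l, (∑ j ∈ s, F k j + H k) - (∑ j ∈ s, F l j + H l)⟫
      = #s * ∑ k ∈ s, ∑ j ∈ s, ⟪y k - y j, F k j⟫ + ∑ k ∈ s, ∑ l ∈ s, ⟪y k - y l, H k - H l⟫ := by
    rw [← sum_sum_inner_sub_sum_of_antisymm y hF, ← Finset.sum_add_distrib]
    refine Finset.sum_congr rfl fun k _ => ?_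
    rw [← Finset.sum_add_distrib]
    refine Finset.sum_congr rfl fun l _ => ?_
    rw [← inner_add_right, add_sub_add_comm]
  have hpos : 0 < ∑ k ∈ s, ∑ j ∈ s, (#s * ⟪y k - y j, F k j⟫ - (M k + M j) * ‖y k - y j‖) := by
    have hterm : ∀ k ∈ s, ∀ j ∈ s, 0 ≤ #s * ⟪y k - y j, F k j⟫ - (M k + M j) * ‖y k - y j‖ := by
      intro k hk j hj
      rcases eq_or_ne k j with rfl | hkj
      · simp
      · linarith [hdom k hk j hj hkj]
    obtain ⟨k, hk, j, hj, hkj⟩ := hpair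
    refine Finset.sum_pos' (fun k hk => Finset.sum_nonneg (hterm k hk)) ⟨k, hk, ?_⟩
    exact Finset.sum_pos' (hterm k hk) ⟨j, hj, by linarith [hdom k hk j hj hkj]⟩
  simp only [Finset.sum_sub_distrib, ← Finset.mul_sum] at hpos
  linarith [neg_sum_sum_le_sum_sum_inner_sub y hH]

end Sums

lemma exists_first_collision {ι X : Type*} [Finite ι] [TopologicalSpace X] [T2Space X]
    {x : ℝ → ι → X} (hx : ∀ i, ContinuousOn (fun t => x t i) (Ici 0))
    (hinit : ∀ i j, i ≠ j → x 0 i ≠ x 0 j)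
    (hcoll : ∃ t ∈ Ici (0 : ℝ), ∃ i j, i ≠ j ∧ x t i = x t j) :
    ∃ τ > 0, (∃ i j, i ≠ j ∧ x τ i = x τ j) ∧
      ∀ t ∈ Ico 0 τ, ∀ i j, i ≠ j → x t i ≠ x t j := by
  set C := {t ∈ Ici (0 : ℝ) | ∃ i j, i ≠ j ∧ x t i = x t j}
  have hC : IsClosed C := by
    have hCeq : C = ⋃ (i) (j) (_ : i ≠ j), Ici 0 ∩ (fun t => (x t i, x t j)) ⁻¹' diagonal X := by
      ext t; simp [C]
    rw [hCeq]
    exact isClosed_iUnion_of_finite fun i => isClosed_iUnion_of_finite fun j =>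
      isClosed_iUnion_of_finite fun _ =>
        ((hx i).prodMk (hx j)).preimage_isClosed_of_isClosed isClosed_Ici isClosed_diagonal
  have hbdd : BddBelow C := ⟨0, fun t ht => ht.1⟩
  have hτ : sInf C ∈ C := hC.csInf_mem hcoll hbdd
  refine ⟨sInf C, lt_of_le_of_ne hτ.1 fun h => ?_, hτ.2, fun t ht i j hij hxij => ?_⟩
  · obtain ⟨i, j, hij, hxij⟩ := hτ.2
    exact hinit i j hij (h ▸ hxij)
  · exact ht.2.not_ge (csInf_le hbdd ⟨ht.1, i, j, hij, hxij⟩)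

lemma eventually_lt_of_hasDerivAt_pos {f : ℝ → ℝ} {a : ℝ} (hf : ContinuousWithinAt f (Iic a) a)
    (hderiv : ∀ᶠ t in 𝓝[<] a, ∃ D, HasDerivAt f D t ∧ 0 < D) :
    ∀ᶠ t in 𝓝[<] a, f t < f a := by
  obtain ⟨b, hba, hb⟩ := mem_nhdsLT_iff_exists_Ioo_subset.mp hderiv
  have hcont : ContinuousOn f (Ioc b a) := by
    intro t ht
    rcases ht.2.lt_or_eq with hta | rfl
    · obtain ⟨D, hD, -⟩ := hb ⟨ht.1, hta⟩
      exact hD.continuousAt.continuousWithinAt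
    · exact hf.mono Ioc_subset_Iic_self
  have hmono : StrictMonoOn f (Ioc b a) := by
    refine strictMonoOn_of_deriv_pos (convex_Ioc b a) hcont fun t ht => ?_
    rw [interior_Ioc] at ht
    obtain ⟨D, hD, hDpos⟩ := hb ht
    rwa [hD.deriv]
  filter_upwards [Ioo_mem_nhdsLT hba] with t ht
  exact hmono (Ioo_subset_Ioc_self ht) (right_mem_Ioc.mpr hba) ht.2

section Spread

variable {ι E : Type*} [NormedAddCommGroup E]

def spread (s : Finset ι) (y : ι → E) : ℝ := ∑ k ∈ s, ∑ l ∈ s, ‖y k - y l‖ ^ 2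

lemma spread_nonneg (s : Finset ι) (y : ι → E) : 0 ≤ spread s y := by
  unfold spread; positivity

lemma spread_eq_zero {s : Finset ι} {y : ι → E} (hy : ∀ k ∈ s, ∀ l ∈ s, y k = y l) :
    spread s y = 0 :=
  Finset.sum_eq_zero fun k hk => Finset.sum_eq_zero fun l hl => by simp [hy k hk l hl]

lemma continuousAt_spread {s : Finset ι} {y : ℝ → ι → E} {t : ℝ}
    (hy : ∀ k, ContinuousAt (fun t => y t k) t) : ContinuousAt (fun t => spread s (y t)) t := by
  unfold spread; fun_prop

lemma hasDerivAt_spread [InnerProductSpace ℝ E] {s : Finset ι} {y : ℝ → ι → E} {v : ι → E} {t : ℝ}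
    (hy : ∀ k, HasDerivAt (fun t => y t k) (v k) t) :
    HasDerivAt (fun t => spread s (y t)) (2 * ∑ k ∈ s, ∑ l ∈ s, ⟪y t k - y t l, v k - v l⟫) t := by
  simp only [spread, Finset.mul_sum]
  exact HasDerivAt.fun_sum fun k _ => HasDerivAt.fun_sum fun l _ => ((hy k).sub (hy l)).norm_sq

end Spread

lemma abs_one_add_mul_cos_le (J s : ℝ) : |1 + J * Real.cos s| ≤ 1 + |J| := by
  calc |1 + J * Real.cos s| ≤ |1| + |J| * |Real.cos s| := by rw [← abs_mul]; exact abs_add_le _ _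
    _ ≤ 1 + |J| * 1 := by gcongr; exacts [abs_one.le, Real.abs_cos_le_one s]
    _ = 1 + |J| := by ring

section Dynamics

variable {ι E : Type*} [NormedAddCommGroup E] [InnerProductSpace ℝ E] {J α β τ : ℝ}
  {θ : ℝ → ι → ℝ} {x : ℝ → ι → E} {A : Finset ι}

lemma exists_eventually_norm_sum_compl_swarmForce_le [Fintype ι] [DecidableEq ι]
    (hx : ∀ i, ContinuousAt (fun t => x t i) τ) (hsep : ∀ k ∈ A, ∀ j ∉ A, x τ j ≠ x τ k) :
    ∃ M : ι → ℝ, ∀ᶠ t in 𝓝 τ, ∀ k ∈ A,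
      ‖∑ j ∈ Aᶜ, swarmForce α β (1 + J * Real.cos (θ t j - θ t k)) (x t j - x t k)‖ ≤ M k := by
  have hbdd : ∀ k ∈ A, ∃ M, ∀ᶠ t in 𝓝 τ,
      ‖∑ j ∈ Aᶜ, swarmForce α β (1 + J * Real.cos (θ t j - θ t k)) (x t j - x t k)‖ ≤ M := by
    intro k hk
    have hO := Asymptotics.IsBigO.fun_sum fun j hj =>
      swarmForce_isBigO_one (α := α) (β := β) ((hx j).sub (hx k)).tendsto
        (sub_ne_zero.mpr (hsep k hk j (Finset.mem_compl.mp hj)))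
        (fun t => abs_one_add_mul_cos_le J (θ t j - θ t k))
    obtain ⟨M, hM⟩ := (Asymptotics.isBigO_one_iff ℝ).mp hO
    exact ⟨M, hM⟩
  choose! M hM using hbdd
  exact ⟨M, (eventually_all_finset A).mpr hM⟩

lemma eventually_swarmForce_dominates (hαβ : α < β) (hβ : 1 < β)
    (hx : ∀ i, ContinuousAt (fun t => x t i) τ)
    (hfree : ∀ᶠ t in 𝓝[<] τ, ∀ i j, i ≠ j → x t i ≠ x t j)
    (hA : ∀ k ∈ A, ∀ l ∈ A, x τ k = x τ l) (M : ι → ℝ) :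
    ∀ᶠ t in 𝓝[<] τ, ∀ k ∈ A, ∀ j ∈ A, k ≠ j → (M k + M j) * ‖x t k - x t j‖ <
      #A * ⟪x t k - x t j, swarmForce α β (1 + J * Real.cos (θ t j - θ t k)) (x t j - x t k)⟫ := by
  refine (eventually_all_finset A).mpr fun k hk => (eventually_all_finset A).mpr fun j hj =>
    eventually_imp_distrib_left.mpr fun hkj => ?_
  have hr : Tendsto (fun t => ‖x t j - x t k‖) (𝓝[<] τ) (𝓝[>] 0) := by
    refine tendsto_nhdsWithin_iff.mpr ⟨?_, hfree.mono fun t ht => ?_⟩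
    · have h := ((hx j).tendsto.sub (hx k).tendsto).norm
      rw [hA j hj k hk, sub_self, norm_zero] at h
      exact h.mono_left nhdsWithin_le_nhds
    · exact norm_pos_iff.mpr (sub_ne_zero.mpr (ht j k (Ne.symm hkj)))
  have hcard : (0 : ℝ) < #A := by exact_mod_cast Finset.card_pos.mpr ⟨k, hk⟩
  filter_upwards [hr.eventually (eventually_mul_lt_mul_rpow_sub_rpow hαβ hβ hcard (1 + |J|)
    (M k + M j)), hfree] with t hdom hft
  rw [← neg_sub (x t j) (x t k), inner_neg_swarmForce (sub_ne_zero.mpr (hft j k (Ne.symm hkj))),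
    norm_neg]
  exact hdom _ ((le_abs_self _).trans (abs_one_add_mul_cos_le _ _))

end Dynamics

section Velocity

variable {E : Type*} [NormedAddCommGroup E] [InnerProductSpace ℝ E] {N : ℕ} {J α β : ℝ}

noncomputable def swarmVelocity (N : ℕ) (J α β : ℝ) (θ : Fin N → ℝ) (y : Fin N → E) (i : Fin N) :
    E :=
  (1 / ((N : ℝ) - 1)) •
    ∑ j ∈ Finset.univ.erase i, swarmForce α β (1 + J * Real.cos (θ j - θ i)) (y j - y i)

lemma swarmVelocity_eq_smul_add (θ : Fin N → ℝ) (y : Fin N → E) (s : Finset (Fin N)) (i : Fin N) :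
    swarmVelocity N J α β θ y i = (1 / ((N : ℝ) - 1)) •
      (∑ j ∈ s, swarmForce α β (1 + J * Real.cos (θ j - θ i)) (y j - y i) +
        ∑ j ∈ sᶜ, swarmForce α β (1 + J * Real.cos (θ j - θ i)) (y j - y i)) := by
  rw [swarmVelocity, Finset.sum_add_sum_compl, Finset.sum_erase _ (by simp)]

lemma eventually_hasDerivAt_spread_pos (hN : 2 ≤ N) (hαβ : α < β) (hβ : 1 < β) {τ : ℝ}
    {θ : ℝ → Fin N → ℝ} {x : ℝ → Fin N → E} {A : Finset (Fin N)}
    (hx : ∀ i, ContinuousAt (fun t => x t i) τ)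
    (hode : ∀ᶠ t in 𝓝[<] τ, ∀ i,
      HasDerivAt (fun s => x s i) (swarmVelocity N J α β (θ t) (x t) i) t)
    (hfree : ∀ᶠ t in 𝓝[<] τ, ∀ i j, i ≠ j → x t i ≠ x t j)
    (hA : ∀ k ∈ A, ∀ l ∈ A, x τ k = x τ l) (hsep : ∀ k ∈ A, ∀ j ∉ A, x τ j ≠ x τ k)
    (hpair : ∃ k ∈ A, ∃ j ∈ A, k ≠ j) :
    ∀ᶠ t in 𝓝[<] τ, ∃ D, HasDerivAt (fun s => spread A (x s)) D t ∧ 0 < D := by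
  obtain ⟨M, hM⟩ := exists_eventually_norm_sum_compl_swarmForce_le (J := J) (α := α) (β := β)
    (θ := θ) hx hsep
  filter_upwards [hode, nhdsWithin_le_nhds hM,
    eventually_swarmForce_dominates hαβ hβ hx hfree hA M] with t hv hext hdom
  refine ⟨_, hasDerivAt_spread hv, ?_⟩
  have hκ : 0 < 1 / ((N : ℝ) - 1) := by
    have : (2 : ℝ) ≤ N := by exact_mod_cast hN
    exact one_div_pos.mpr (by linarith)
  simp only [swarmVelocity_eq_smul_add _ _ A, ← smul_sub, real_inner_smul_right, ← Finset.mul_sum]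
  refine mul_pos two_pos (mul_pos hκ (sum_sum_inner_sub_pos (x t) ?_ hext hdom hpair))
  intro k _ j _
  rw [← neg_sub (x t j), swarmForce_neg, ← neg_sub (θ t j), Real.cos_neg]

end Velocity

theorem collision_avoidance_general (N : ℕ) (hN : 2 ≤ N) (J : ℝ)
    (α β : ℝ) (hα : 1 ≤ α) (hαβ : α < β)
    (θ : ℝ → Fin N → ℝ)
    (x : ℝ → Fin N → EuclideanSpace ℝ (Fin 2))
    (hxc : ∀ i : Fin N, ContinuousOn (fun t => x t i) (Set.Ici 0))
    (hinit : ∀ i j : Fin N, i ≠ j → x 0 i ≠ x 0 j)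
    (hode : ∀ (i : Fin N), ∀ t ∈ Set.Ici (0 : ℝ),
      (∀ k l : Fin N, k ≠ l → x t k ≠ x t l) →
      HasDerivWithinAt (fun s => x s i)
        ((1 / ((N : ℝ) - 1)) • ∑ j ∈ Finset.univ.erase i,
          (((1 + J * Real.cos (θ t j - θ t i)) / ‖x t j - x t i‖ ^ α) • (x t j - x t i)
            - (‖x t j - x t i‖ ^ β)⁻¹ • (x t j - x t i)))
        (Set.Ici 0) t) :
    ∀ t ∈ Set.Ici (0 : ℝ), ∀ i j : Fin N, i ≠ j → x t i ≠ x t j := by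
  by_contra! hcoll
  obtain ⟨τ, hτ, ⟨i, j, hij, hxij⟩, hfree⟩ := exists_first_collision hxc hinit hcoll
  have hx : ∀ k, ContinuousAt (fun t => x t k) τ := fun k => (hxc k).continuousAt (Ici_mem_nhds hτ)
  have hbefore : ∀ᶠ t in 𝓝[<] τ, t ∈ Ioo 0 τ := Ioo_mem_nhdsLT hτ
  have hode' : ∀ᶠ t in 𝓝[<] τ, ∀ k,
      HasDerivAt (fun s => x s k) (swarmVelocity N J α β (θ t) (x t) k) t :=
    hbefore.mono fun t ht k =>
      (hode k t ht.1.le (hfree t (Ioo_subset_Ico_self ht))).hasDerivAt (Ici_mem_nhds ht.1)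
  set A := Finset.univ.filter fun k => x τ k = x τ i
  have hA : ∀ k ∈ A, ∀ l ∈ A, x τ k = x τ l := fun k hk l hl => by simp_all [A]
  have hderiv := eventually_hasDerivAt_spread_pos hN hαβ (by linarith) hx hode'
    (hbefore.mono fun t ht => hfree t (Ioo_subset_Ico_self ht))
    hA (fun k hk l hl => by simp_all [A]) ⟨i, by simp [A], j, by simp [A, hxij], hij⟩
  obtain ⟨t, ht⟩ := (eventually_lt_of_hasDerivAt_pos (continuousAt_spread hx).continuousWithinAt
    hderiv).exists
  rw [spread_eq_zero hA] at ht
  exact (spread_nonneg _ _).not_gt ht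

/-- Finite-time collision avoidance for swarmalators with spatial dynamics
`ẋ_i = (1/(N−1)) ∑_{j≠i} [ (x_j−x_i)/‖x_j−x_i‖^α (1 + J cos(θ_j−θ_i))
  − (x_j−x_i)/‖x_j−x_i‖^β ]`. -/
theorem collision_avoidance (N : ℕ) (hN : 2 ≤ N) (J : ℝ) (hJ0 : 0 ≤ J) (hJ1 : J < 1)
    (α β : ℝ) (hα : 1 ≤ α) (hαβ : α < β)
    (θ : ℝ → Fin N → ℝ) (hθc : ∀ i : Fin N, ContinuousOn (fun t => θ t i) (Set.Ici 0))
    (x : ℝ → Fin N → EuclideanSpace ℝ (Fin 2))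
    (hxc : ∀ i : Fin N, ContinuousOn (fun t => x t i) (Set.Ici 0))
    (hinit : ∀ i j : Fin N, i ≠ j → x 0 i ≠ x 0 j)
    (hode : ∀ (i : Fin N), ∀ t ∈ Set.Ici (0 : ℝ),
      (∀ k l : Fin N, k ≠ l → x t k ≠ x t l) →
      HasDerivWithinAt (fun s => x s i)
        ((1 / ((N : ℝ) - 1)) • ∑ j ∈ Finset.univ.erase i,
          (((1 + J * Real.cos (θ t j - θ t i)) / ‖x t j - x t i‖ ^ α) • (x t j - x t i)
            - (‖x t j - x t i‖ ^ β)⁻¹ • (x t j - x t i)))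
        (Set.Ici 0) t) :
    ∀ t ∈ Set.Ici (0 : ℝ), ∀ i j : Fin N, i ≠ j → x t i ≠ x t j :=
  collision_avoidance_general N hN J α β hα hαβ θ x hxc hinit hode
end

section
/- Root-of-unity identity IV: for every integer N ≥ 2, with u = exp(2πi/N) ∈ ℂ, the complex sum ∑_{m=1}^{N−1} (u^m + u^{−m})(1 − u^m)/|1 − u^m| equals the real number sin(3π/N)/(1 − cos(3π/N)) − sin(π/N)/(1 − cos(π/N)), where |·| denotes the complex modulus. -/
/-!
Put `v = exp(πi/N)`, so `u = v²`. For `0 < m < N` the point `w = v^m` lies on the upper half of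
the unit circle, where `1 - w² = -2 (Im w) i w`; hence `(1 - u^m)/|1 - u^m| = -i w` and the
`m`-th term is `-i (w³ + w⁻¹)`. Both `z = v³` and `z = v⁻¹` satisfy `z^N = -1`, so
`∑_{m=1}^{N-1} z^m = (1 + z)/(1 - z)`, and for `z = e^{ix}` one has
`-i (1 + z)/(1 - z) = cot (x/2) = sin x/(1 - cos x)`.
-/

open Complex Finset

lemma sum_Ico_one_pow_of_pow_eq_neg_one {K : Type*} [Field K] {z : K} {N : ℕ} (hN : 1 ≤ N)
    (hz : z ≠ 1) (hzN : z ^ N = -1) : ∑ m ∈ Ico 1 N, z ^ m = (1 + z) / (1 - z) := by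
  rw [geom_sum_Ico hz hN, hzN, pow_one,
    div_eq_div_iff (sub_ne_zero.mpr hz) (sub_ne_zero.mpr hz.symm)]
  ring

lemma ofReal_sin_div_one_sub_cos (x : ℝ) (hx : exp (x * I) ≠ 1) :
    ((Real.sin x / (1 - Real.cos x) : ℝ) : ℂ) = -I * ((1 + exp (x * I)) / (1 - exp (x * I))) := by
  have hden : 1 - exp (x * I) ≠ 0 := sub_ne_zero.mpr hx.symm
  have hcos : (1 : ℂ) - Real.cos x ≠ 0 := by
    intro h
    apply hden
    have hc : Real.cos x = 1 := by exact_mod_cast (sub_eq_zero.mp h).symm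
    have hs : Real.sin x = 0 := by nlinarith [Real.sin_sq_add_cos_sq x]
    rw [exp_mul_I, ← ofReal_cos, ← ofReal_sin, hc, hs]
    simp
  have pyth : (Real.sin x : ℂ) ^ 2 + (Real.cos x : ℂ) ^ 2 = 1 := by
    exact_mod_cast Real.sin_sq_add_cos_sq x
  rw [mul_div_assoc', eq_div_iff hden, exp_mul_I, ← ofReal_cos, ← ofReal_sin, ofReal_div,
    ofReal_sub, ofReal_one, div_mul_eq_mul_div, div_eq_iff hcos]
  linear_combination (-I) * pyth + ((Real.sin x : ℂ) * (1 - (Real.cos x : ℂ))) * I_sq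

lemma exp_odd_mul_pi_div_mul_I_pow {k : ℤ} (hk : Odd k) {N : ℕ} (hN : N ≠ 0) :
    exp ((k * Real.pi / N : ℝ) * I) ^ N = -1 := by
  rw [← exp_nat_mul, show (N : ℂ) * ((k * Real.pi / N : ℝ) * I) = k * (Real.pi * I) by
    push_cast; field_simp, exp_int_mul, exp_pi_mul_I, hk.neg_one_zpow]

lemma neg_I_mul_sum_Ico_one_exp_odd_mul_pi_div {k : ℤ} (hk : Odd k) {N : ℕ} (hN : 1 ≤ N) :
    -I * ∑ m ∈ Ico 1 N, exp ((k * Real.pi / N : ℝ) * I) ^ m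
      = ((Real.sin (k * Real.pi / N) / (1 - Real.cos (k * Real.pi / N)) : ℝ) : ℂ) := by
  have hpow := exp_odd_mul_pi_div_mul_I_pow hk (N := N) (by omega)
  have hne : exp ((k * Real.pi / N : ℝ) * I) ≠ 1 := by
    intro h
    rw [h, one_pow] at hpow
    norm_num at hpow
  rw [sum_Ico_one_pow_of_pow_eq_neg_one hN hne hpow, ofReal_sin_div_one_sub_cos _ hne]

lemma one_sub_sq_eq_of_norm_eq_one {w : ℂ} (hw : ‖w‖ = 1) :
    1 - w ^ 2 = -2 * w.im * I * w := by
  have h : w.re * w.re + w.im * w.im = 1 := by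
    rw [← normSq_apply, ← Complex.sq_norm, hw, one_pow]
  apply Complex.ext
  · simp only [sq, sub_re, one_re, mul_re, neg_mul, neg_re, re_ofNat, ofReal_re, im_ofNat,
      ofReal_im, mul_zero, sub_zero, I_re, mul_im, zero_mul, add_zero, I_im, mul_one, sub_self,
      zero_sub, neg_neg]
    linear_combination -h
  · simp [sq]
    ring

lemma one_sub_sq_div_norm_of_norm_eq_one {w : ℂ} (hw : ‖w‖ = 1) (him : 0 < w.im) :
    (1 - w ^ 2) / (‖1 - w ^ 2‖ : ℂ) = -I * w := by
  have him' : (w.im : ℂ) ≠ 0 := ofReal_ne_zero.mpr him.ne'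
  rw [one_sub_sq_eq_of_norm_eq_one hw]
  simp only [neg_mul, norm_neg, Complex.norm_mul, norm_ofNat, norm_real, Real.norm_eq_abs,
    abs_of_pos him, norm_I, mul_one, hw, ofReal_mul, ofReal_ofNat]
  field_simp

lemma sq_add_inv_mul_one_sub_sq_div_norm {w : ℂ} (hw : ‖w‖ = 1) (him : 0 < w.im) :
    (w ^ 2 + (w ^ 2)⁻¹) * (1 - w ^ 2) / (‖1 - w ^ 2‖ : ℂ) = -I * (w ^ 3 + w⁻¹) := by
  have hw0 : w ≠ 0 := norm_ne_zero_iff.mp (by rw [hw]; exact one_ne_zero)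
  rw [mul_div_assoc, one_sub_sq_div_norm_of_norm_eq_one hw him]
  field_simp

lemma im_exp_mul_pi_div_mul_I_pos {m N : ℕ} (hm : 0 < m) (hmN : m < N) :
    0 < (exp ((m * Real.pi / N : ℝ) * I)).im := by
  have hm' : (0 : ℝ) < m := by exact_mod_cast hm
  have hN : (0 : ℝ) < N := by exact_mod_cast hm.trans hmN
  rw [exp_ofReal_mul_I_im]
  apply Real.sin_pos_of_pos_of_lt_pi (by positivity)
  rw [div_lt_iff₀ hN, mul_comm]
  gcongr

/-- Root-of-unity identity IV: with `u = exp(2πi/N)`,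
`∑_{m=1}^{N−1} (u^m + u^{−m})(1 − u^m)/|1 − u^m|
  = sin(3π/N)/(1 − cos(3π/N)) − sin(π/N)/(1 − cos(π/N))`. -/
theorem root_of_unity_sum_unit_weighted (N : ℕ) (hN : 2 ≤ N)
    (u : ℂ) (hu : u = Complex.exp (2 * (Real.pi : ℂ) * Complex.I / (N : ℂ))) :
    ∑ m ∈ Finset.Ico 1 N,
      (u ^ (m : ℤ) + u ^ (-(m : ℤ))) * (1 - u ^ m) / ((‖1 - u ^ m‖ : ℝ) : ℂ)
      = ((Real.sin (3 * Real.pi / N) / (1 - Real.cos (3 * Real.pi / N))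
          - Real.sin (Real.pi / N) / (1 - Real.cos (Real.pi / N)) : ℝ) : ℂ) := by
  set v := exp ((Real.pi / N : ℝ) * I)
  have hv_pow (k : ℕ) : v ^ k = exp ((k * Real.pi / N : ℝ) * I) := by
    rw [← exp_nat_mul]; push_cast; ring_nf
  have hu : u = v ^ 2 := by
    rw [hu, hv_pow]; push_cast; ring_nf
  have hterm : ∀ m ∈ Ico 1 N,
      (u ^ (m : ℤ) + u ^ (-(m : ℤ))) * (1 - u ^ m) / ((‖1 - u ^ m‖ : ℝ) : ℂ)
        = -I * (v ^ 3) ^ m + -I * v⁻¹ ^ m := by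
    intro m hm
    obtain ⟨hm1, hmN⟩ := mem_Ico.mp hm
    have hw : ‖v ^ m‖ = 1 := by rw [hv_pow]; exact norm_exp_ofReal_mul_I _
    have him : 0 < (v ^ m).im := by rw [hv_pow]; exact im_exp_mul_pi_div_mul_I_pos hm1 hmN
    have hum : u ^ m = (v ^ m) ^ 2 := by rw [hu, ← pow_mul, ← pow_mul, mul_comm]
    rw [zpow_neg, zpow_natCast, hum, sq_add_inv_mul_one_sub_sq_div_norm hw him, ← pow_mul,
      ← pow_mul, mul_comm m 3, inv_pow]
    ring
  have hv3 : v ^ 3 = exp (((3 : ℤ) * Real.pi / N : ℝ) * I) := by rw [hv_pow]; push_cast; rfl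
  have hvinv : v⁻¹ = exp (((-1 : ℤ) * Real.pi / N : ℝ) * I) := by
    rw [← exp_neg]; push_cast; ring_nf
  rw [sum_congr rfl hterm, sum_add_distrib, ← mul_sum, ← mul_sum, hv3, hvinv,
    neg_I_mul_sum_Ico_one_exp_odd_mul_pi_div (by decide) (by omega),
    neg_I_mul_sum_Ico_one_exp_odd_mul_pi_div (by decide) (by omega), ← ofReal_add]
  congr 1
  simp only [Int.cast_ofNat, Int.cast_neg, Int.cast_one, neg_one_mul, neg_div,
    Real.sin_neg, Real.cos_neg]
  ring
end

section
/- The ring phase wave configuration is stationary for the repulsive phase dynamics for every radius: let N ≥ 2, u = exp(2πi/N) ∈ ℂ, R > 0, C ∈ ℝ, z_k = R·u^k and θ_k = 2πk/N + C. Then for every index k, ∑_{j≠k} sin(θ_j − θ_k)/|z_j − z_k| = 0. -/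
/-!
Every summand depends only on the phase difference: since `z_j = R·exp(i(θ_j − C))`, we get
`|z_j − z_k| = |R|·|2 sin((θ_j − θ_k)/2)|`, so the summand is `F(θ_j − θ_k)` with `F` odd and
`2π`-periodic. The phase differences are `2πm/N` for `m` running over `ℤ/N`, and an odd function
summed over the group `ℤ/N` vanishes. The excluded term `j = k` is `sin 0 / 0 = 0`, so it may be
put back in.
-/

open Real Complex

theorem Function.Odd.sum_fin_comp_natCast_sub_eq_zero {M : Type*} [AddCommGroup M]
    [IsAddTorsionFree M] {N : ℕ} {g : ℤ → M} (hodd : g.Odd) (hper : Function.Periodic g N)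
    (a : ℤ) : ∑ j : Fin N, g (j - a) = 0 := by
  rcases eq_or_ne N 0 with rfl | hN
  · simp
  have : NeZero N := ⟨hN⟩
  set G : ZMod N → M := fun x => g (x.cast : ℤ)
  have hG : ∀ m : ℤ, G m = g m := fun m => by
    simp only [G, ZMod.coe_intCast, Int.emod_def, mul_comm (N : ℤ)]
    exact hper.sub_int_mul_eq _
  have hGodd : G.Odd := fun x => by
    rw [← ZMod.intCast_zmod_cast x, ← Int.cast_neg, hG, hG, hodd]
  have hbij : Function.Bijective (fun j : Fin N => ((j : ℕ) : ZMod N)) := by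
    refine (Fintype.bijective_iff_injective_and_card _).2 ⟨fun i j hij => ?_, by simp⟩
    have := congrArg ZMod.val hij
    simp only [ZMod.val_natCast, Nat.mod_eq_of_lt i.isLt, Nat.mod_eq_of_lt j.isLt] at this
    exact Fin.ext this
  calc ∑ j : Fin N, g (j - a) = ∑ x : ZMod N, G (x - a) :=
        Fintype.sum_bijective _ hbij _ _ fun j => by rw [← hG]; push_cast; rfl
    _ = ∑ x : ZMod N, G x := (Equiv.subRight (a : ZMod N)).sum_comp G
    _ = 0 := hGodd.sum_eq_zero

theorem Function.Periodic.comp_mul_intCast_div {M : Type*} {h : ℝ → M} {T : ℝ}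
    (hper : Function.Periodic h T) (N : ℕ) :
    Function.Periodic (fun m : ℤ => h (T * m / N)) N := fun m => by
  rcases eq_or_ne N 0 with rfl | hN
  · simp
  have : T * ((m + N : ℤ) : ℝ) / N = T * m / N + T := by
    push_cast; field_simp
  simp only [this, hper _]

theorem Complex.norm_exp_ofReal_mul_I_sub_exp_ofReal_mul_I (a b : ℝ) :
    ‖exp (a * I) - exp (b * I)‖ = |2 * Real.sin ((a - b) / 2)| := by
  have : exp (a * I) - exp (b * I) = exp (b * I) * (exp (I * (a - b : ℝ)) - 1) := by
    rw [mul_sub, ← Complex.exp_add]; push_cast; ring_nf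
  rw [this, norm_mul, Complex.norm_exp_ofReal_mul_I, one_mul,
    Complex.norm_exp_I_mul_ofReal_sub_one, Real.norm_eq_abs]

noncomputable def ringCoupling (R t : ℝ) : ℝ := Real.sin t / (|R| * |2 * Real.sin (t / 2)|)

theorem ringCoupling_odd (R : ℝ) : (ringCoupling R).Odd := fun t => by
  simp [ringCoupling, neg_div, abs_neg]

theorem ringCoupling_periodic (R : ℝ) : Function.Periodic (ringCoupling R) (2 * π) := fun t => by
  simp [ringCoupling, add_div, Real.sin_add_pi, mul_div_cancel_left₀]

theorem Function.Odd.sum_fin_comp_mul_natCast_sub_div_eq_zero {M : Type*} [AddCommGroup M]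
    [IsAddTorsionFree M] {h : ℝ → M} {T : ℝ} (hodd : h.Odd) (hper : Function.Periodic h T)
    (N : ℕ) (a : ℤ) : ∑ j : Fin N, h (T * ((j - a : ℤ) : ℝ) / N) = 0 :=
  sum_fin_comp_natCast_sub_eq_zero (g := fun m : ℤ => h (T * m / N))
    (fun m => by simp only [Int.cast_neg, mul_neg, neg_div, hodd _])
    (hper.comp_mul_intCast_div N) a

theorem ring_phase_wave_phase_stationary_general (N : ℕ) (R C : ℝ)
    (u : ℂ) (hu : u = Complex.exp (2 * (Real.pi : ℂ) * Complex.I / (N : ℂ)))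
    (z : Fin N → ℂ) (hz : ∀ k : Fin N, z k = (R : ℂ) * u ^ ((k : ℕ) + 1))
    (θ : Fin N → ℝ) (hθ : ∀ k : Fin N, θ k = 2 * Real.pi * ((k : ℕ) + 1) / N + C) :
    ∀ k : Fin N, ∑ j ∈ Finset.univ.erase k,
      Real.sin (θ j - θ k) / ‖z j - z k‖ = 0 := by
  intro k
  have hz_exp : ∀ j, z j = R * exp ((θ j - C : ℝ) * I) := fun j => by
    rw [hz, hu, hθ, ← Complex.exp_nat_mul]
    push_cast
    ring_nf
  have hθ_sub : ∀ j : Fin N, θ j - θ k = 2 * π * ((j - k : ℤ) : ℝ) / N := fun j => by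
    rw [hθ, hθ]
    push_cast
    ring
  have hterm : ∀ j, Real.sin (θ j - θ k) / ‖z j - z k‖ = ringCoupling R (θ j - θ k) := fun j => by
    rw [hz_exp, hz_exp, ← mul_sub, norm_mul, Complex.norm_real, Real.norm_eq_abs,
      norm_exp_ofReal_mul_I_sub_exp_ofReal_mul_I, sub_sub_sub_cancel_right, ringCoupling]
  rw [Finset.sum_erase _ (by simp), Finset.sum_congr rfl fun j _ => hterm j]
  simp only [hθ_sub]
  exact (ringCoupling_odd R).sum_fin_comp_mul_natCast_sub_div_eq_zero (ringCoupling_periodic R) N k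

/-- The ring phase wave configuration `z_k = R u^k`, `θ_k = 2πk/N + C` is stationary
for the repulsive phase dynamics `θ̇_k = (ε_r/(N−1)) ∑_{j≠k} sin(θ_j−θ_k)/|z_j−z_k|`
for every radius: the sum `∑_{j≠k} sin(θ_j−θ_k)/|z_j−z_k|` vanishes for every k. -/
theorem ring_phase_wave_phase_stationary (N : ℕ) (hN : 2 ≤ N) (R C : ℝ) (hR : 0 < R)
    (u : ℂ) (hu : u = Complex.exp (2 * (Real.pi : ℂ) * Complex.I / (N : ℂ)))
    (z : Fin N → ℂ) (hz : ∀ k : Fin N, z k = (R : ℂ) * u ^ ((k : ℕ) + 1))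
    (θ : Fin N → ℝ) (hθ : ∀ k : Fin N, θ k = 2 * Real.pi * ((k : ℕ) + 1) / N + C) :
    ∀ k : Fin N, ∑ j ∈ Finset.univ.erase k,
      Real.sin (θ j - θ k) / ‖z j - z k‖ = 0 :=
  ring_phase_wave_phase_stationary_general N R C u hu z hz θ hθ
end
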